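/- Let G = (V, E) be a finite undirected graph and E' an orientation of E (for each {u,v} ∈ E, exactly one of (u,v), (v,u) is in E'). Let T be the DL-Lite_core TBox consisting of the axioms ∃s_i ⊓ ∃t_j ⊑ ⊥ for all s, t ∈ {r, g, b} with s ≠ t and all i, j ∈ {1, 2}, and ∃s_1^- ⊓ ∃s_2^- ⊑ ⊥ for all s ∈ {r, g, b}. Let A_G contain, for each e = (u,v) ∈ E' and each s ∈ {r, g, b}, the assertions s_1(u, e) and s_2(v, e). Let ω assign weight ∞ to every axiom of T and weight 1 to every assertion of A_G. Then G is 3-colourable if and only if (T, A_G)_ω is 4|E|-satisfiable. -/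

import Mathlib

namespace DL

/-! ### Syntax -/

abbrev IndName := ℕ
abbrev CName := ℕ
abbrev RName := ℕ

/-- Roles: role names and inverse roles. -/
inductive Role where
  | name : RName → Role
  | inv  : RName → Role
deriving DecidableEq

/-- `ALCHIO` concepts. -/
inductive Concept where
  | top  : Concept
  | bot  : Concept
  | atom : CName → Concept
  | nom  : IndName → Concept
  | neg  : Concept → Concept
  | conj : Concept → Concept → Concept
  | ex   : Role → Concept → Concept
deriving DecidableEq

/-- TBox axioms: concept inclusions and role inclusions. -/
inductive Axiom where
  | ci : Concept → Concept → Axiom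
  | ri : Role → Role → Axiom
deriving DecidableEq

/-- ABox assertions. -/
inductive Assertion where
  | ca : CName → IndName → Assertion
  | ra : RName → IndName → IndName → Assertion
deriving DecidableEq

/-! ### Interpretations -/

/-- A DL interpretation with domain a subset of a universe `U`.  Individual names are
interpreted via `indI` (under the standard names assumption, the individual names of the
ABox under consideration are interpreted "as themselves", i.e. injectively). -/
structure Interp (U : Type) where
  dom : Set U
  indI : IndName → U
  cI : CName → Set U
  rI : RName → Set (U × U)
  cI_sub : ∀ A, cI A ⊆ dom
  rI_sub : ∀ r p, p ∈ rI r → p.1 ∈ dom ∧ p.2 ∈ dom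

variable {U : Type}

/-- Every individual name denotes an element of the domain. -/
def Interp.Proper (I : Interp U) : Prop := ∀ a, I.indI a ∈ I.dom

def Role.interp (I : Interp U) : Role → Set (U × U)
  | Role.name r => I.rI r
  | Role.inv r  => {p | (p.2, p.1) ∈ I.rI r}

def Concept.interp (I : Interp U) : Concept → Set U
  | Concept.top => I.dom
  | Concept.bot => ∅
  | Concept.atom A => I.cI A
  | Concept.nom a => {I.indI a} ∩ I.dom
  | Concept.neg C => I.dom \ Concept.interp I C
  | Concept.conj C D => Concept.interp I C ∩ Concept.interp I D
  | Concept.ex r C => {d | ∃ e, (d, e) ∈ Role.interp I r ∧ e ∈ Concept.interp I C}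

def Assertion.sat (I : Interp U) : Assertion → Prop
  | Assertion.ca A a => I.indI a ∈ I.cI A
  | Assertion.ra r a b => (I.indI a, I.indI b) ∈ I.rI r

/-! ### Violations and cost -/

/-- Violations of a concept inclusion `C ⊑ D`. -/
def vioCI (I : Interp U) (C D : Concept) : Set U :=
  Concept.interp I C \ Concept.interp I D

/-- Violations of a role inclusion `r ⊑ s`. -/
def vioRI (I : Interp U) (r s : Role) : Set (U × U) :=
  Role.interp I r \ Role.interp I s

/-- The number of violations of an axiom. -/
noncomputable def Axiom.vioCount (I : Interp U) : Axiom → ℕ∞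
  | Axiom.ci C D => (vioCI I C D).encard
  | Axiom.ri r s => (vioRI I r s).encard

open Classical in
/-- The cost of an interpretation w.r.t. a weighted knowledge base `(T, A)` with weight
functions `wT` (on TBox axioms) and `wA` (on ABox assertions). -/
noncomputable def cost (T : Finset Axiom) (A : Finset Assertion)
    (wT : Axiom → ℕ∞) (wA : Assertion → ℕ∞) (I : Interp U) : ℕ∞ :=
  (∑ τ ∈ T, wT τ * Axiom.vioCount I τ) +
    ∑ α ∈ A, (if Assertion.sat I α then 0 else wA α)

/-! ### Queries -/

inductive Term where
  | var : ℕ → Term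
  | ind : IndName → Term
deriving DecidableEq

inductive QAtom where
  | ca : CName → Term → QAtom
  | ra : RName → Term → Term → QAtom
deriving DecidableEq

/-- A Boolean conjunctive query: a finite set of atoms, all of whose variables are
(implicitly) existentially quantified. -/
abbrev BCQ := Finset QAtom

def Term.eval (I : Interp U) (π : ℕ → U) : Term → U
  | Term.var v => π v
  | Term.ind a => I.indI a

def QAtom.sat (I : Interp U) (π : ℕ → U) : QAtom → Prop
  | QAtom.ca A t => Term.eval I π t ∈ I.cI A
  | QAtom.ra r t t' => (Term.eval I π t, Term.eval I π t') ∈ I.rI r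

/-- Satisfaction of a BCQ in an interpretation. -/
def satQ (I : Interp U) (q : BCQ) : Prop :=
  ∃ π : ℕ → U, (∀ v, π v ∈ I.dom) ∧ ∀ a ∈ q, QAtom.sat I π a

/-- An instance query is a BCQ with a single atom. -/
def IsIQ (q : BCQ) : Prop := ∃ a : QAtom, q = {a}

/-! ### Cost-based semantics -/

/-- `k`-satisfiability: some interpretation has cost at most `k`. -/
def ksat (T : Finset Axiom) (A : Finset Assertion)
    (wT : Axiom → ℕ∞) (wA : Assertion → ℕ∞) (k : ℕ) : Prop :=
  ∃ (U : Type) (I : Interp U), I.Proper ∧ cost T A wT wA I ≤ (k : ℕ∞)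

/-- `K ⊨ₚᵏ q`: some interpretation of cost at most `k` satisfies `q`. -/
def satP (T : Finset Axiom) (A : Finset Assertion)
    (wT : Axiom → ℕ∞) (wA : Assertion → ℕ∞) (k : ℕ) (q : BCQ) : Prop :=
  ∃ (U : Type) (I : Interp U), I.Proper ∧ cost T A wT wA I ≤ (k : ℕ∞) ∧ satQ I q

/-- `K ⊨꜀ᵏ q`: every interpretation of cost at most `k` satisfies `q`. -/
def satC (T : Finset Axiom) (A : Finset Assertion)
    (wT : Axiom → ℕ∞) (wA : Assertion → ℕ∞) (k : ℕ) (q : BCQ) : Prop :=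
  ∀ (U : Type) (I : Interp U), I.Proper → cost T A wT wA I ≤ (k : ℕ∞) → satQ I q

/-- The optimal cost of a weighted knowledge base. -/
noncomputable def optCost (T : Finset Axiom) (A : Finset Assertion)
    (wT : Axiom → ℕ∞) (wA : Assertion → ℕ∞) : ℕ∞ :=
  sInf {c : ℕ∞ | ∃ (U : Type) (I : Interp U), I.Proper ∧ cost T A wT wA I = c}

/-- `K ⊨ₚᵒᵖᵗ q`: some interpretation of optimal cost satisfies `q`. -/
noncomputable def satPopt (T : Finset Axiom) (A : Finset Assertion)
    (wT : Axiom → ℕ∞) (wA : Assertion → ℕ∞) (q : BCQ) : Prop :=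
  ∃ (U : Type) (I : Interp U), I.Proper ∧ cost T A wT wA I = optCost T A wT wA ∧ satQ I q

/-- `K ⊨꜀ᵒᵖᵗ q`: every interpretation of optimal cost satisfies `q`. -/
noncomputable def satCopt (T : Finset Axiom) (A : Finset Assertion)
    (wT : Axiom → ℕ∞) (wA : Assertion → ℕ∞) (q : BCQ) : Prop :=
  ∀ (U : Type) (I : Interp U), I.Proper → cost T A wT wA I = optCost T A wT wA → satQ I q

/-! ### Occurrences of symbols -/

def Role.base : Role → RName
  | Role.name r => r
  | Role.inv r => r

def Concept.cnames : Concept → Finset CName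
  | Concept.atom A => {A}
  | Concept.neg C => C.cnames
  | Concept.conj C D => C.cnames ∪ D.cnames
  | Concept.ex _ C => C.cnames
  | _ => ∅

def Concept.rnames : Concept → Finset RName
  | Concept.neg C => C.rnames
  | Concept.conj C D => C.rnames ∪ D.rnames
  | Concept.ex r C => insert r.base C.rnames
  | _ => ∅

def Concept.indNames : Concept → Finset IndName
  | Concept.nom a => {a}
  | Concept.neg C => C.indNames
  | Concept.conj C D => C.indNames ∪ D.indNames
  | Concept.ex _ C => C.indNames
  | _ => ∅

def Axiom.cnames : Axiom → Finset CName
  | Axiom.ci C D => C.cnames ∪ D.cnames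
  | Axiom.ri _ _ => ∅

def Axiom.rnames : Axiom → Finset RName
  | Axiom.ci C D => C.rnames ∪ D.rnames
  | Axiom.ri r s => {r.base, s.base}

def Axiom.indNames : Axiom → Finset IndName
  | Axiom.ci C D => C.indNames ∪ D.indNames
  | Axiom.ri _ _ => ∅

def Assertion.cnames : Assertion → Finset CName
  | Assertion.ca A _ => {A}
  | Assertion.ra _ _ _ => ∅

def Assertion.rnames : Assertion → Finset RName
  | Assertion.ca _ _ => ∅
  | Assertion.ra r _ _ => {r}

def Assertion.indNames : Assertion → Finset IndName
  | Assertion.ca _ a => {a}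
  | Assertion.ra _ a b => {a, b}

/-- The individual names occurring in an ABox. -/
def aboxInds (A : Finset Assertion) : Finset IndName := A.biUnion Assertion.indNames

/-- The individual names occurring in a KB. -/
def kbInds (T : Finset Axiom) (A : Finset Assertion) : Finset IndName :=
  T.biUnion Axiom.indNames ∪ aboxInds A

def Term.indNames : Term → Finset IndName
  | Term.var _ => ∅
  | Term.ind a => {a}

def QAtom.indNames : QAtom → Finset IndName
  | QAtom.ca _ t => t.indNames
  | QAtom.ra _ t t' => t.indNames ∪ t'.indNames

def QAtom.cnames : QAtom → Finset CName
  | QAtom.ca A _ => {A}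
  | QAtom.ra _ _ _ => ∅

def qInds (q : BCQ) : Finset IndName := q.biUnion QAtom.indNames

def qCnames (q : BCQ) : Finset CName := q.biUnion QAtom.cnames

/-! ### Sizes -/

def Concept.size : Concept → ℕ
  | Concept.top => 1
  | Concept.bot => 1
  | Concept.atom _ => 1
  | Concept.nom _ => 1
  | Concept.neg C => C.size + 1
  | Concept.conj C D => C.size + D.size + 1
  | Concept.ex _ C => C.size + 2

def Axiom.size : Axiom → ℕ
  | Axiom.ci C D => C.size + D.size + 1
  | Axiom.ri _ _ => 3

def Assertion.size : Assertion → ℕ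
  | Assertion.ca _ _ => 2
  | Assertion.ra _ _ _ => 3

def tboxSize (T : Finset Axiom) : ℕ := ∑ τ ∈ T, τ.size

def aboxSize (A : Finset Assertion) : ℕ := ∑ α ∈ A, α.size

/-! ### DL-Lite fragments -/

/-- Basic concepts: concept names and unqualified existential restrictions `∃r` (with a
possibly inverse role `r`), the latter rendered as `∃r.⊤`. -/
inductive IsBasic : Concept → Prop
  | atom (A : CName) : IsBasic (Concept.atom A)
  | ex (r : Role) : IsBasic (Concept.ex r Concept.top)

/-- A `DL-Lite_core` axiom: `B ⊑ C` or `B ⊓ C ⊑ ⊥` with `B, C` basic concepts. -/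
def IsCoreAxiom (τ : Axiom) : Prop :=
  (∃ B C, τ = Axiom.ci B C ∧ IsBasic B ∧ IsBasic C) ∨
  (∃ B C, τ = Axiom.ci (Concept.conj B C) Concept.bot ∧ IsBasic B ∧ IsBasic C)

def IsDLLiteCore (T : Finset Axiom) : Prop := ∀ τ ∈ T, IsCoreAxiom τ

/-- Concepts built from basic concepts using `¬`, `⊓` (and hence also `⊔`). -/
inductive IsBoolConcept : Concept → Prop
  | basic {C} : IsBasic C → IsBoolConcept C
  | neg {C} : IsBoolConcept C → IsBoolConcept (Concept.neg C)
  | conj {C D} : IsBoolConcept C → IsBoolConcept D → IsBoolConcept (Concept.conj C D)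

/-- A `DL-Lite_bool^H` axiom: a concept inclusion between Boolean combinations of basic
concepts, or a role inclusion. -/
def IsBoolHAxiom (τ : Axiom) : Prop :=
  (∃ C D, τ = Axiom.ci C D ∧ IsBoolConcept C ∧ IsBoolConcept D) ∨ (∃ r s, τ = Axiom.ri r s)

def IsDLLiteBoolH (T : Finset Axiom) : Prop := ∀ τ ∈ T, IsBoolHAxiom τ

/-! Encoding of a finite undirected graph with vertex set `Fin nV`, given by an
orientation `E'` of its edge set: for each undirected edge `{u,v}`, exactly one of
`(u,v)`, `(v,u)` belongs to `E'`. -/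

/-- The role name `s_i` for a colour `s ∈ {r,g,b}` and `i ∈ {1,2}`. -/
def rn (s : Fin 3) (i : Fin 2) : RName := 2 * (s : ℕ) + (i : ℕ)

/-- The individual name of a vertex. -/
def vtxN (u : Fin nV') : IndName := (u : ℕ)

/-- The individual name of an (oriented) edge. -/
def edgN (nV : ℕ) (p : Fin nV × Fin nV) : IndName := nV + (p.1 : ℕ) * nV + (p.2 : ℕ)

/-- The basic concept `∃s_i`. -/
def exRn (s : Fin 3) (i : Fin 2) : Concept := Concept.ex (Role.name (rn s i)) Concept.top

/-- The basic concept `∃s_i⁻`. -/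
def exRnInv (s : Fin 3) (i : Fin 2) : Concept := Concept.ex (Role.inv (rn s i)) Concept.top

/-- The `DL-Lite_core` TBox: `∃s_i ⊓ ∃t_j ⊑ ⊥` for `s ≠ t`, and `∃s_1⁻ ⊓ ∃s_2⁻ ⊑ ⊥`. -/
def colTbox : Finset Axiom :=
  (((Finset.univ : Finset ((Fin 3 × Fin 2) × Fin 3 × Fin 2)).filter
      fun x => x.1.1 ≠ x.2.1).image
    fun x => Axiom.ci (Concept.conj (exRn x.1.1 x.1.2) (exRn x.2.1 x.2.2)) Concept.bot) ∪
  ((Finset.univ : Finset (Fin 3)).image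
    fun s => Axiom.ci (Concept.conj (exRnInv s 0) (exRnInv s 1)) Concept.bot)

/-- The ABox `A_G`: for each oriented edge `e = (u,v)` and each colour `s`, the
assertions `s_1(u, e)` and `s_2(v, e)`. -/
def colAbox (nV : ℕ) (E' : Finset (Fin nV × Fin nV)) : Finset Assertion :=
  ((E' ×ˢ (Finset.univ : Finset (Fin 3))).image
    fun x => Assertion.ra (rn x.2 0) (vtxN x.1.1) (edgN nV x.1)) ∪
  ((E' ×ˢ (Finset.univ : Finset (Fin 3))).image
    fun x => Assertion.ra (rn x.2 1) (vtxN x.1.2) (edgN nV x.1))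

/-! A finite cost forces every TBox axiom to hold, since they have weight `∞`. Then an element
is the source of roles of at most one colour, so for each edge `e = (u, v)` and each end at
most one of the three assertions `s_1(u, e)` (resp. `s_2(v, e)`) holds: at least four
assertions per edge fail. Cost `4|E|` therefore forces exactly one satisfied assertion at each
end, and its colour is the colour of that vertex; the two colours differ because `e` cannot be
the target of both `s_1` and `s_2`. Conversely a 3-colouring `σ` yields the interpretation
containing exactly the assertions `σ(u)_i(u, e)`, which satisfies the TBox and violates
exactly four assertions per edge. -/

open Finset

theorem Finset.eq_of_forall_le_of_sum_le_card_nsmul {ι M : Type*} [AddCommMonoid M]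
    [PartialOrder M] [IsOrderedCancelAddMonoid M] {s : Finset ι} {f : ι → M} {c : M}
    (hle : ∀ i ∈ s, c ≤ f i) (hsum : ∑ i ∈ s, f i ≤ #s • c) : ∀ i ∈ s, f i = c := by
  have hsum_eq : ∑ _i ∈ s, c = ∑ i ∈ s, f i :=
    le_antisymm (sum_le_sum hle) (by rwa [sum_const])
  exact fun i hi => ((sum_eq_sum_iff_of_le hle).1 hsum_eq i hi).symm

section Cost

variable {T : Finset Axiom} {A : Finset Assertion} {I : Interp U}

open Classical in
theorem cost_eq_of_vioCount_eq_zero {wT : Axiom → ℕ∞} {wA : Assertion → ℕ∞}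
    (hT : ∀ τ ∈ T, Axiom.vioCount I τ = 0) :
    cost T A wT wA I = ∑ α ∈ A, if Assertion.sat I α then 0 else wA α := by
  rw [cost, sum_eq_zero fun τ hτ => by rw [hT τ hτ, mul_zero], zero_add]

theorem vioCount_eq_zero_of_cost_ne_top {wA : Assertion → ℕ∞}
    (h : cost T A (fun _ => ⊤) wA I ≠ ⊤) {τ : Axiom} (hτ : τ ∈ T) :
    Axiom.vioCount I τ = 0 := by
  by_contra hne
  refine h (top_le_iff.1 ?_)
  calc (⊤ : ℕ∞) = ⊤ * Axiom.vioCount I τ := (WithTop.top_mul hne).symm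
    _ ≤ ∑ τ' ∈ T, ⊤ * Axiom.vioCount I τ' :=
        single_le_sum (f := fun τ' => ⊤ * Axiom.vioCount I τ') (fun _ _ => zero_le) hτ
    _ ≤ cost T A (fun _ => ⊤) wA I := le_self_add

end Cost

theorem Concept.mem_interp_ex_top {I : Interp U} {r : Role} {d : U} :
    d ∈ (Concept.ex r Concept.top).interp I ↔ ∃ e, (d, e) ∈ r.interp I := by
  refine ⟨fun ⟨e, he, _⟩ => ⟨e, he⟩, fun ⟨e, he⟩ => ⟨e, he, ?_⟩⟩
  cases r with
  | name r => exact (I.rI_sub r _ he).2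
  | inv r => exact (I.rI_sub r _ he).1

theorem vioCount_disjointness_eq_zero_iff {I : Interp U} {B C : Concept} :
    Axiom.vioCount I (Axiom.ci (Concept.conj B C) Concept.bot) = 0 ↔
      Disjoint (B.interp I) (C.interp I) := by
  simp [Axiom.vioCount, vioCI, Concept.interp, Set.disjoint_iff_inter_eq_empty]

theorem rn_inj {s t : Fin 3} {i j : Fin 2} : rn s i = rn t j ↔ s = t ∧ i = j := by
  refine ⟨fun h => ?_, fun ⟨hs, hi⟩ => hs ▸ hi ▸ rfl⟩
  change (_ : ℕ) = _ at h
  simp only [rn, Fin.ext_iff] at h ⊢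
  omega

theorem edgN_inj {nV : ℕ} {p q : Fin nV × Fin nV} : edgN nV p = edgN nV q ↔ p = q := by
  refine ⟨fun h => finProdFinEquiv.injective (Fin.ext ?_), fun h => h ▸ rfl⟩
  change (_ : ℕ) = _ at h
  simp only [edgN] at h
  simp only [finProdFinEquiv_apply_val]
  linarith [mul_comm (p.1 : ℕ) nV, mul_comm (q.1 : ℕ) nV]

theorem mem_colTbox {τ : Axiom} :
    τ ∈ colTbox ↔
      (∃ s i t j, s ≠ t ∧ τ = Axiom.ci (Concept.conj (exRn s i) (exRn t j)) Concept.bot) ∨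
        ∃ s, τ = Axiom.ci (Concept.conj (exRnInv s 0) (exRnInv s 1)) Concept.bot := by
  simp [colTbox, eq_comm]

theorem mem_interp_exRn {I : Interp U} {s : Fin 3} {i : Fin 2} {d : U} :
    d ∈ (exRn s i).interp I ↔ ∃ e, (d, e) ∈ I.rI (rn s i) :=
  Concept.mem_interp_ex_top

theorem mem_interp_exRnInv {I : Interp U} {s : Fin 3} {i : Fin 2} {d : U} :
    d ∈ (exRnInv s i).interp I ↔ ∃ e, (e, d) ∈ I.rI (rn s i) :=
  Concept.mem_interp_ex_top

def IsColTboxModel (I : Interp U) : Prop :=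
  (∀ d s t i j, (∃ e, (d, e) ∈ I.rI (rn s i)) → (∃ e, (d, e) ∈ I.rI (rn t j)) → s = t) ∧
    ∀ e s, (∃ d, (d, e) ∈ I.rI (rn s 0)) → (∃ d, (d, e) ∈ I.rI (rn s 1)) → False

theorem vioCount_colTbox_eq_zero_iff {I : Interp U} :
    (∀ τ ∈ colTbox, Axiom.vioCount I τ = 0) ↔ IsColTboxModel I := by
  constructor
  · intro h
    have hdisj : ∀ {B C : Concept}, Axiom.ci (Concept.conj B C) Concept.bot ∈ colTbox →
        Disjoint (B.interp I) (C.interp I) :=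
      fun hτ => vioCount_disjointness_eq_zero_iff.1 (h _ hτ)
    refine ⟨fun d s t i j hs ht => by_contra fun hst => ?_, fun e s h0 h1 => ?_⟩
    · exact Set.disjoint_left.1 (hdisj (mem_colTbox.2 (Or.inl ⟨s, i, t, j, hst, rfl⟩)))
        (mem_interp_exRn.2 hs) (mem_interp_exRn.2 ht)
    · exact Set.disjoint_left.1 (hdisj (mem_colTbox.2 (Or.inr ⟨s, rfl⟩)))
        (mem_interp_exRnInv.2 h0) (mem_interp_exRnInv.2 h1)
  · rintro ⟨hsrc, htgt⟩ τ hτ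
    rcases mem_colTbox.1 hτ with ⟨s, i, t, j, hst, rfl⟩ | ⟨s, rfl⟩ <;>
      rw [vioCount_disjointness_eq_zero_iff, Set.disjoint_left]
    · exact fun d hs ht => hst (hsrc d s t i j (mem_interp_exRn.1 hs) (mem_interp_exRn.1 ht))
    · exact fun e h0 h1 => htgt e s (mem_interp_exRnInv.1 h0) (mem_interp_exRnInv.1 h1)

section ABox

variable {nV : ℕ}

def edgeEnd (p : Fin nV × Fin nV) : Fin 2 → Fin nV := ![p.1, p.2]

def colAssertion (nV : ℕ) (p : Fin nV × Fin nV) (i : Fin 2) (s : Fin 3) : Assertion :=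
  Assertion.ra (rn s i) (vtxN (edgeEnd p i)) (edgN nV p)

theorem colAssertion_injective :
    Function.Injective fun x : ((Fin nV × Fin nV) × Fin 2) × Fin 3 =>
      colAssertion nV x.1.1 x.1.2 x.2 := by
  rintro ⟨⟨p, i⟩, s⟩ ⟨⟨q, j⟩, t⟩ h
  simp only [colAssertion, Assertion.ra.injEq, rn_inj, edgN_inj] at h
  obtain ⟨⟨rfl, rfl⟩, -, rfl⟩ := h
  rfl

theorem colAbox_eq_image (E' : Finset (Fin nV × Fin nV)) :
    colAbox nV E' = ((E' ×ˢ univ) ×ˢ univ).image fun x => colAssertion nV x.1.1 x.1.2 x.2 := by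
  ext α
  simp only [colAbox, colAssertion, edgeEnd, mem_union, mem_image, mem_product, mem_univ,
    and_true, Prod.exists, Fin.exists_fin_two, Matrix.cons_val_zero, Matrix.cons_val_one]
  aesop

open Classical in
noncomputable def sideViolations (I : Interp U) (p : Fin nV × Fin nV) (i : Fin 2) : ℕ :=
  #{s | ¬ Assertion.sat I (colAssertion nV p i s)}

open Classical in
theorem sum_colAbox_unsat (I : Interp U) (E' : Finset (Fin nV × Fin nV)) :
    ∑ α ∈ colAbox nV E', (if Assertion.sat I α then 0 else 1 : ℕ∞) =
      ↑(∑ x ∈ E' ×ˢ univ, sideViolations I x.1 x.2) := by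
  rw [colAbox_eq_image, sum_image colAssertion_injective.injOn, sum_product,
    Nat.cast_sum]
  refine sum_congr rfl fun x _ => ?_
  simp only [sideViolations, natCast_card_filter, ite_not]

end ABox

section Colouring

variable {nV : ℕ} {E' : Finset (Fin nV × Fin nV)} {σ : Fin nV → Fin 3}

def colouringInterp (E' : Finset (Fin nV × Fin nV)) (σ : Fin nV → Fin 3) : Interp ℕ where
  dom := Set.univ
  indI := id
  cI _ := ∅
  rI n := {q | ∃ p ∈ E', ∃ i, n = rn (σ (edgeEnd p i)) i ∧ q = (vtxN (edgeEnd p i), edgN nV p)}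
  cI_sub _ := Set.empty_subset _
  rI_sub _ _ _ := ⟨trivial, trivial⟩

theorem sat_colAssertion_colouringInterp {p : Fin nV × Fin nV} (hp : p ∈ E') (i : Fin 2)
    (s : Fin 3) :
    Assertion.sat (colouringInterp E' σ) (colAssertion nV p i s) ↔ s = σ (edgeEnd p i) := by
  simp only [Assertion.sat, colouringInterp, colAssertion, id, Set.mem_ofPred_eq,
    Prod.mk.injEq, rn_inj, edgN_inj]
  constructor
  · rintro ⟨q, -, j, ⟨hs, rfl⟩, -, rfl⟩
    exact hs
  · rintro rfl
    exact ⟨p, hp, i, ⟨rfl, rfl⟩, rfl, rfl⟩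

theorem isColTboxModel_colouringInterp (hσ : ∀ p ∈ E', σ p.1 ≠ σ p.2) :
    IsColTboxModel (colouringInterp E' σ) := by
  refine ⟨?_, ?_⟩
  · rintro d s t i j ⟨e, p, -, i', hs, hd⟩ ⟨e', q, -, j', ht, hd'⟩
    obtain ⟨rfl, -⟩ := rn_inj.1 hs
    obtain ⟨rfl, -⟩ := rn_inj.1 ht
    simp only [Prod.mk.injEq] at hd hd'
    rw [Fin.val_injective (hd.1.symm.trans hd'.1)]
  · rintro e s ⟨d, p, hp, i, hs, he⟩ ⟨d', q, -, j, ht, he'⟩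
    simp only [Prod.mk.injEq] at he he'
    obtain rfl : p = q := edgN_inj.1 (he.2.symm.trans he'.2)
    obtain ⟨hs, rfl⟩ := rn_inj.1 hs
    obtain ⟨ht, rfl⟩ := rn_inj.1 ht
    exact hσ p hp (hs.symm.trans ht)

theorem sideViolations_colouringInterp {p : Fin nV × Fin nV} (hp : p ∈ E') (i : Fin 2) :
    sideViolations (colouringInterp E' σ) p i = 2 := by
  simp only [sideViolations, sat_colAssertion_colouringInterp hp]
  simp [filter_ne', card_univ]

theorem cost_colouringInterp (hσ : ∀ p ∈ E', σ p.1 ≠ σ p.2) :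
    cost colTbox (colAbox nV E') (fun _ => ⊤) (fun _ => 1) (colouringInterp E' σ) =
      ↑(4 * #E') := by
  rw [cost_eq_of_vioCount_eq_zero
      (vioCount_colTbox_eq_zero_iff.2 (isColTboxModel_colouringInterp hσ)),
    sum_colAbox_unsat,
    sum_congr rfl fun x hx => sideViolations_colouringInterp (mem_product.1 hx).1 x.2]
  simp [card_product]
  ring

end Colouring

section Model

variable {I : Interp U}

open Classical in
noncomputable def vertexColour (I : Interp U) (d : U) : Fin 3 :=
  if h : ∃ s i e, (d, e) ∈ I.rI (rn s i) then h.choose else 0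

theorem vertexColour_eq (hI : IsColTboxModel I) {d e : U} {s : Fin 3} {i : Fin 2}
    (h : (d, e) ∈ I.rI (rn s i)) : vertexColour I d = s := by
  have hex : ∃ s i e, (d, e) ∈ I.rI (rn s i) := ⟨s, i, e, h⟩
  obtain ⟨j, e', h'⟩ := hex.choose_spec
  rw [vertexColour, dif_pos hex]
  exact hI.1 d _ s j i ⟨e', h'⟩ ⟨e, h⟩

variable {nV : ℕ}

open Classical in
theorem two_le_sideViolations (hI : IsColTboxModel I) (p : Fin nV × Fin nV) (i : Fin 2) :
    2 ≤ sideViolations I p i := by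
  have hsat : #{s | Assertion.sat I (colAssertion nV p i s)} ≤ 1 :=
    card_le_one.2 fun s hs t ht => hI.1 _ s t i i ⟨_, (mem_filter.1 hs).2⟩ ⟨_, (mem_filter.1 ht).2⟩
  have hsplit := card_filter_add_card_filter_not (s := univ)
    (fun s => Assertion.sat I (colAssertion nV p i s))
  rw [card_univ, Fintype.card_fin] at hsplit
  unfold sideViolations
  omega

theorem exists_sat_of_sideViolations_lt (p : Fin nV × Fin nV) (i : Fin 2)
    (h : sideViolations I p i < 3) : ∃ s, Assertion.sat I (colAssertion nV p i s) := by
  by_contra! hnone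
  simp [sideViolations, hnone] at h

theorem exists_colouring_of_isColTboxModel (hI : IsColTboxModel I)
    {E' : Finset (Fin nV × Fin nV)}
    (hsat : ∀ p ∈ E', ∀ i, ∃ s, Assertion.sat I (colAssertion nV p i s)) :
    ∃ σ : Fin nV → Fin 3, ∀ p ∈ E', σ p.1 ≠ σ p.2 := by
  refine ⟨fun u => vertexColour I (I.indI (vtxN u)), fun p hp hcol => ?_⟩
  obtain ⟨s, hs⟩ := hsat p hp 0
  obtain ⟨t, ht⟩ := hsat p hp 1
  have hst : s = t := by
    rw [← vertexColour_eq hI hs, ← vertexColour_eq hI ht]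
    exact hcol
  exact hI.2 _ s ⟨_, hs⟩ ⟨_, hst ▸ ht⟩

end Model

theorem statement13_general (nV : ℕ) (E' : Finset (Fin nV × Fin nV)) :
    (∃ σ : Fin nV → Fin 3, ∀ p ∈ E', σ p.1 ≠ σ p.2) ↔
      ksat colTbox (colAbox nV E') (fun _ => ⊤) (fun _ => 1) (4 * E'.card) := by
  refine ⟨fun ⟨σ, hσ⟩ =>
    ⟨ℕ, colouringInterp E' σ, fun _ => trivial, (cost_colouringInterp hσ).le⟩, ?_⟩
  rintro ⟨U, I, -, hcost⟩
  have hI : IsColTboxModel I := vioCount_colTbox_eq_zero_iff.1 fun _ =>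
    vioCount_eq_zero_of_cost_ne_top (ne_top_of_le_ne_top (ENat.natCast_ne_top _) hcost)
  rw [cost_eq_of_vioCount_eq_zero (vioCount_colTbox_eq_zero_iff.2 hI), sum_colAbox_unsat,
    Nat.cast_le] at hcost
  have hsides : ∀ x ∈ E' ×ˢ univ, sideViolations I x.1 x.2 = 2 :=
    Finset.eq_of_forall_le_of_sum_le_card_nsmul (fun x _ => two_le_sideViolations hI x.1 x.2)
      (by rw [card_product, card_univ, Fintype.card_fin, smul_eq_mul]; linarith)
  refine exists_colouring_of_isColTboxModel hI fun p hp i =>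
    exists_sat_of_sideViolations_lt p i ?_
  rw [hsides (p, i) (mem_product.2 ⟨hp, mem_univ i⟩)]
  norm_num

/-- A finite undirected graph `G` is 3-colourable iff the WKB
`(T, A_G)_ω` (with weight `∞` on every axiom and weight `1` on every assertion) is
`4|E|`-satisfiable. -/
theorem statement13 (nV : ℕ) (E' : Finset (Fin nV × Fin nV))
    (hloop : ∀ p ∈ E', p.1 ≠ p.2)
    (horient : ∀ p ∈ E', (p.2, p.1) ∉ E') :
    (∃ σ : Fin nV → Fin 3, ∀ p ∈ E', σ p.1 ≠ σ p.2) ↔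
      ksat colTbox (colAbox nV E') (fun _ => ⊤) (fun _ => 1) (4 * E'.card) :=
  statement13_general nV E'

end DL
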